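/- Let G be a group with involutions a, b, c, d, e, f satisfying the braid relations aba = bab, bcb = cbc, cec = ece, efe = fef, fdf = dfd, dad = ada, the commutations [a,c]=[a,e]=[a,f]=[b,d]=[b,e]=[b,f]=[c,f]=[c,d]=[d,e]=1, and c·a·b·a·c = d·f·e·f·d. Then all six products b·a·d·f·e, a·d·f·e·c, d·f·e·c·b, f·e·c·b·a, e·c·b·a·d, and c·b·a·d·f are equal in G. -/

import Mathlib

/-!
The six generators form the Coxeter hexagon `b — a — d — f — e — c — b` (braid relations along
the edges, commutation across). Read in the reflection representation, the extra relation
identifies the reflections in the roots `α_c + α_a + α_b` and `δ - (α_c + α_a + α_b)`, and each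
claimed equality `s_i u = u s_{i-1}` (with `u` the product of the next four letters) says the
same for a simple root `α_i`. Conjugating the extra relation by `a c` gives it for `α_b`, and
conjugating by `s_{i-1} s_i` passes it from `α_{i-1}` to `α_i` around the hexagon.
-/

open scoped commutatorElement

section

variable {G : Type*} [Group G]

theorem mul_mul_cancel_of_sq_eq_one {x : G} (hx : x ^ 2 = 1) (y : G) : x * (x * y) = y := by
  rw [← mul_assoc, ← sq, hx, one_mul]

theorem mul_self_eq_one_of_sq_eq_one {x : G} (hx : x ^ 2 = 1) : x * x = 1 :=
  (sq x).symm.trans hx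

theorem mul_five_eq_of_conj_eq {a b c d e f : G} (ha : a ^ 2 = 1) (hc : c ^ 2 = 1)
    (hd : d ^ 2 = 1) (he : e ^ 2 = 1) (hf : f ^ 2 = 1) (hce : c * e * c = e * c * e)
    (hcd : Commute c d) (hcf : Commute c f) (h : c * a * b * a * c = d * f * e * f * d) :
    b * a * d * f * e = a * d * f * e * c := by
  have hb : b = a * d * f * e * c * e * f * d * a :=
    calc b = a * (c * (c * a * b * a * c) * c) * a := by
          simp only [mul_assoc, mul_mul_cancel_of_sq_eq_one ha, mul_mul_cancel_of_sq_eq_one hc,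
            mul_self_eq_one_of_sq_eq_one ha, mul_self_eq_one_of_sq_eq_one hc, mul_one]
      _ = a * (d * f * (c * e * c) * f * d) * a := by
          rw [h]; simp only [mul_assoc, hcd.left_comm, hcf.left_comm]
      _ = a * d * f * e * c * e * f * d * a := by rw [hce]; simp only [mul_assoc]
  rw [hb]
  simp only [mul_assoc, mul_mul_cancel_of_sq_eq_one ha, mul_mul_cancel_of_sq_eq_one hd,
    mul_mul_cancel_of_sq_eq_one hf, mul_self_eq_one_of_sq_eq_one he, mul_one]

theorem mul_mul_eq_mul_mul_of_braid {x₁ x₂ y z : G} (h₁ : x₁ ^ 2 = 1) (h₂ : x₂ ^ 2 = 1)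
    (hbr : x₁ * x₂ * x₁ = x₂ * x₁ * x₂) (hy : Commute x₁ y) (h : x₁ * x₂ * y = x₂ * y * z) :
    x₂ * y * z = y * z * x₁ := by
  have hyz : y * z = x₂ * x₁ * x₂ * y :=
    calc y * z = x₂ * (x₂ * y * z) := by rw [mul_assoc x₂ y, mul_mul_cancel_of_sq_eq_one h₂]
      _ = x₂ * x₁ * x₂ * y := by rw [← h]; simp only [mul_assoc]
  calc x₂ * y * z = x₁ * x₂ * y := h.symm
    _ = x₂ * x₁ * x₂ * x₁ * y := by
      rw [← hbr, mul_assoc (x₁ * x₂), ← sq, h₁, mul_one]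
    _ = y * z * x₁ := by rw [hyz, mul_assoc _ y, ← hy.eq, mul_assoc]

theorem mul_five_eq_of_braid {x₁ x₂ x₃ x₄ x₅ x₆ : G} (h₁ : x₁ ^ 2 = 1) (h₂ : x₂ ^ 2 = 1)
    (hbr : x₁ * x₂ * x₁ = x₂ * x₁ * x₂) (h₃ : Commute x₁ x₃) (h₄ : Commute x₁ x₄)
    (h₅ : Commute x₁ x₅) (h : x₁ * x₂ * x₃ * x₄ * x₅ = x₂ * x₃ * x₄ * x₅ * x₆) :
    x₂ * x₃ * x₄ * x₅ * x₆ = x₃ * x₄ * x₅ * x₆ * x₁ := by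
  simpa only [mul_assoc] using mul_mul_eq_mul_mul_of_braid (y := x₃ * x₄ * x₅) (z := x₆) h₁ h₂
    hbr ((h₃.mul_right h₄).mul_right h₅) (by simpa only [mul_assoc] using h)

end

theorem stmt3_general {G : Type*} [Group G] (a b c d e f : G)
    (ha : a ^ 2 = 1) (hb : b ^ 2 = 1) (hc : c ^ 2 = 1)
    (hd : d ^ 2 = 1) (he : e ^ 2 = 1) (hf : f ^ 2 = 1)
    (br1 : a * b * a = b * a * b)
    (br3 : c * e * c = e * c * e) (br4 : e * f * e = f * e * f)
    (br5 : f * d * f = d * f * d) (br6 : d * a * d = a * d * a)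
    (c1 : ⁅a, c⁆ = 1) (c2 : ⁅a, e⁆ = 1) (c3 : ⁅a, f⁆ = 1)
    (c4 : ⁅b, d⁆ = 1) (c5 : ⁅b, e⁆ = 1) (c6 : ⁅b, f⁆ = 1)
    (c7 : ⁅c, f⁆ = 1) (c8 : ⁅c, d⁆ = 1) (c9 : ⁅d, e⁆ = 1)
    (hrel : c * a * b * a * c = d * f * e * f * d) :
    b * a * d * f * e = a * d * f * e * c ∧
    a * d * f * e * c = d * f * e * c * b ∧
    d * f * e * c * b = f * e * c * b * a ∧
    f * e * c * b * a = e * c * b * a * d ∧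
    e * c * b * a * d = c * b * a * d * f := by
  rw [commutatorElement_eq_one_iff_commute] at c1 c2 c3 c4 c5 c6 c7 c8 c9
  have h₁ := mul_five_eq_of_conj_eq ha hc hd he hf br3 c8 c7 hrel
  have h₂ := mul_five_eq_of_braid hb ha br1.symm c4 c6 c5 h₁
  have h₃ := mul_five_eq_of_braid ha hd br6.symm c3 c2 c1 h₂
  have h₄ := mul_five_eq_of_braid hd hf br5.symm c9 c8.symm c4.symm h₃
  have h₅ := mul_five_eq_of_braid hf he br4.symm c7.symm c6.symm c3.symm h₄
  exact ⟨h₁, h₂, h₃, h₄, h₅⟩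

theorem stmt3 {G : Type*} [Group G] (a b c d e f : G)
    (ha : a ^ 2 = 1) (hb : b ^ 2 = 1) (hc : c ^ 2 = 1)
    (hd : d ^ 2 = 1) (he : e ^ 2 = 1) (hf : f ^ 2 = 1)
    (br1 : a * b * a = b * a * b) (br2 : b * c * b = c * b * c)
    (br3 : c * e * c = e * c * e) (br4 : e * f * e = f * e * f)
    (br5 : f * d * f = d * f * d) (br6 : d * a * d = a * d * a)
    (c1 : ⁅a, c⁆ = 1) (c2 : ⁅a, e⁆ = 1) (c3 : ⁅a, f⁆ = 1)
    (c4 : ⁅b, d⁆ = 1) (c5 : ⁅b, e⁆ = 1) (c6 : ⁅b, f⁆ = 1)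
    (c7 : ⁅c, f⁆ = 1) (c8 : ⁅c, d⁆ = 1) (c9 : ⁅d, e⁆ = 1)
    (hrel : c * a * b * a * c = d * f * e * f * d) :
    b * a * d * f * e = a * d * f * e * c ∧
    a * d * f * e * c = d * f * e * c * b ∧
    d * f * e * c * b = f * e * c * b * a ∧
    f * e * c * b * a = e * c * b * a * d ∧
    e * c * b * a * d = c * b * a * d * f :=
  stmt3_general a b c d e f ha hb hc hd he hf br1 br3 br4 br5 br6 c1 c2 c3 c4 c5 c6 c7 c8 c9 hrel
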